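/- Suppose real numbers ℓ₁ < ℓ₂ < ⋯ < ℓ_{m+1} and Δ ≥ Δ₁ ≥ Δ₂ ≥ ⋯ ≥ Δ_m ≥ 0 satisfy ℓ₁Δ₁ + Σ_{i=2}^{m} (ℓᵢ − ℓ_{i−1})Δᵢ < D, and (ℓ_{i+1} − ℓᵢ) ≤ (10/3)(ℓᵢ − ℓ_{i−1}) for all 3 ≤ i ≤ m, and ℓ₁Δ + (ℓ₂ − (13/3)ℓ₁)Δ₁ + (ℓ₃ − (13/3)ℓ₂ + (10/3)ℓ₁)Δ₂ ≤ 2Δ. Then ℓ₁Δ + Σ_{i=1}^{m} (ℓ_{i+1} − ℓᵢ)Δᵢ ≤ 2Δ + (10/3)·D. -/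
import Mathlib


theorem stmt16 (m : ℕ) (hm : 3 ≤ m) (ℓ : ℕ → ℝ) (Δ : ℝ) (δ : ℕ → ℝ) (D : ℝ)
    (hD : 0 < D)
    (hℓpos : 0 < ℓ 1)
    (hℓmono : ∀ i, 1 ≤ i → i ≤ m → ℓ i < ℓ (i + 1))
    (hδ0 : 0 ≤ δ m)
    (hδmono : ∀ i, 1 ≤ i → i < m → δ (i + 1) ≤ δ i)
    (hΔ : δ 1 ≤ Δ)
    (hsum : ℓ 1 * δ 1 + ∑ i ∈ Finset.Icc 2 m, (ℓ i - ℓ (i - 1)) * δ i < D)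
    (hratio : ∀ i, 3 ≤ i → i ≤ m → ℓ (i + 1) - ℓ i ≤ (10 / 3) * (ℓ i - ℓ (i - 1)))
    (hxi : ℓ 1 * Δ + (ℓ 2 - (13 / 3) * ℓ 1) * δ 1 +
        (ℓ 3 - (13 / 3) * ℓ 2 + (10 / 3) * ℓ 1) * δ 2 ≤ 2 * Δ) :
    ℓ 1 * Δ + ∑ i ∈ Finset.Icc 1 m, (ℓ (i + 1) - ℓ i) * δ i ≤ 2 * Δ + (10 / 3) * D := by
  -- δ is nonnegative on [1, m]
  have hkey : ∀ j, j ≤ m → ∀ i, 1 ≤ i → i ≤ j → δ j ≤ δ i := by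
    intro j
    induction j with
    | zero => intro _ i h1 h2; omega
    | succ k ih =>
      intro hjm i h1 h2
      rcases Nat.lt_or_ge i (k + 1) with h | h
      · have hk : δ (k + 1) ≤ δ k := hδmono k (by omega) (by omega)
        exact le_trans hk (ih (by omega) i h1 (by omega))
      · have : i = k + 1 := by omega
        rw [this]
  have hδnn : ∀ i, 1 ≤ i → i ≤ m → 0 ≤ δ i := by
    intro i h1 h2
    exact le_trans hδ0 (hkey m le_rfl i h1 h2)
  -- split Icc 1 m
  have hset1 : Finset.Icc 1 m = {1, 2} ∪ Finset.Icc 3 m := by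
    ext x; simp [Finset.mem_Icc, Finset.mem_insert]; omega
  have hset2 : Finset.Icc 2 m = {2} ∪ Finset.Icc 3 m := by
    ext x; simp [Finset.mem_Icc]; omega
  have hdisj1 : Disjoint ({1, 2} : Finset ℕ) (Finset.Icc 3 m) := by
    simp [Finset.disjoint_left, Finset.mem_Icc]
  have hdisj2 : Disjoint ({2} : Finset ℕ) (Finset.Icc 3 m) := by
    simp [Finset.disjoint_left, Finset.mem_Icc]
  have hsum1 : ∑ i ∈ Finset.Icc 1 m, (ℓ (i + 1) - ℓ i) * δ i
      = (ℓ 2 - ℓ 1) * δ 1 + (ℓ 3 - ℓ 2) * δ 2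
        + ∑ i ∈ Finset.Icc 3 m, (ℓ (i + 1) - ℓ i) * δ i := by
    rw [hset1, Finset.sum_union hdisj1]
    norm_num [Finset.sum_pair (by norm_num : (1 : ℕ) ≠ 2)]
  have hsum2 : ∑ i ∈ Finset.Icc 2 m, (ℓ i - ℓ (i - 1)) * δ i
      = (ℓ 2 - ℓ 1) * δ 2 + ∑ i ∈ Finset.Icc 3 m, (ℓ i - ℓ (i - 1)) * δ i := by
    rw [hset2, Finset.sum_union hdisj2]
    norm_num
  -- compare the two tails
  have hcomp : ∑ i ∈ Finset.Icc 3 m, (ℓ (i + 1) - ℓ i) * δ i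
      ≤ (10 / 3) * ∑ i ∈ Finset.Icc 3 m, (ℓ i - ℓ (i - 1)) * δ i := by
    rw [Finset.mul_sum]
    apply Finset.sum_le_sum
    intro i hi
    rw [Finset.mem_Icc] at hi
    have h1 := hratio i hi.1 hi.2
    have h2 := hδnn i (by omega) hi.2
    calc (ℓ (i + 1) - ℓ i) * δ i ≤ (10 / 3) * (ℓ i - ℓ (i - 1)) * δ i :=
          mul_le_mul_of_nonneg_right h1 h2
      _ = 10 / 3 * ((ℓ i - ℓ (i - 1)) * δ i) := by ring
  -- tail of hsum2 is bounded
  have hδ2nn : 0 ≤ δ 2 := hδnn 2 (by omega) (by omega)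
  rw [hsum1]
  rw [hsum2] at hsum
  linarith [hcomp, hsum, hxi]
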